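/- Let $(a_t)_{t\geq 1}$ be nonnegative reals with $a_t \leq c_1 t^{-d/2}$, $\sum_t a_t = \eta < 1$, $d \geq 3$, and let $(b_t)_{t \geq 0}$ be nonnegative with $b_t \leq c_2 t^{-d/2}$ for $t \geq 1$ and $b_0 \leq c_2$. Then there is a constant $C$ such that for all $t \geq 1$, $\sum_{k=0}^{\infty} \sum_{t_0 + t_1 + \cdots + t_k = t} b_{t_0} a_{t_1} \cdots a_{t_k} \leq C t^{-d/2}$, where $t_0 \geq 0$ and $t_1, \dots, t_k \geq 1$. -/

import Mathlib

/-!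
The renewal sum equals `∑_{s+u=t} b s * G u` with `G u = ∑_k a^{*k}(u)`, where `a^{*k}` is the
`k`-fold convolution power of `(a t)_{t ≥ 1}`. Comparing a composition sum with the box
`{0, …, u}^k` gives `a^{*k}(u) ≤ η^k`, so the series over `k` converges. In a composition of `u`
into `k + 1` parts some part is at least `u / (k + 1)`; bounding that factor by the decay of `a`
and the others by the box gives `a^{*(k+1)}(u) ≤ c₁ (k + 1)^{1 + d/2} η^k u^{-d/2}`, whence
`G u = O(u^{-d/2})`. Finally, in each term of `∑_{s+u=t} b s * G u` one of `s, u` is at least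
`t / 2`, so the convolution of two summable `O(s^{-d/2})` sequences is `O(t^{-d/2})`.
-/

open Finset

theorem rpow_neg_le_rpow_mul_rpow_neg {e : ℝ} (he : 0 ≤ e) {m s t : ℕ} (hm : 0 < m) (ht : 0 < t)
    (hts : t ≤ m * s) : (s : ℝ) ^ (-e) ≤ (m : ℝ) ^ e * (t : ℝ) ^ (-e) := by
  have hm' : (0 : ℝ) < m := by exact_mod_cast hm
  have hts' : (t : ℝ) / m ≤ s := by
    rw [div_le_iff₀ hm', mul_comm]; exact_mod_cast hts
  calc (s : ℝ) ^ (-e) ≤ ((t : ℝ) / m) ^ (-e) :=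
        Real.rpow_le_rpow_of_nonpos (by positivity) hts' (by linarith)
    _ = (m : ℝ) ^ e * (t : ℝ) ^ (-e) := by
        rw [Real.div_rpow (by positivity) hm'.le, Real.rpow_neg hm'.le, div_eq_mul_inv, inv_inv,
          mul_comm]

theorem summable_of_le_rpow_neg {x : ℕ → ℝ} {X e : ℝ} (hx0 : ∀ s, 0 ≤ x s)
    (hx : ∀ s, 1 ≤ s → x s ≤ X * (s : ℝ) ^ (-e)) (he : 1 < e) : Summable x := by
  have hp : Summable fun n : ℕ => X * ((n + 1 : ℕ) : ℝ) ^ (-e) :=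
    ((summable_nat_add_iff 1).2 (Real.summable_nat_rpow.2 (by linarith))).mul_left X
  exact (summable_nat_add_iff 1).1
    (hp.of_nonneg_of_le (fun n => hx0 _) fun n => hx _ (Nat.le_add_left 1 n))

theorem summable_add_one_rpow_mul_geometric {p r : ℝ} (hr0 : 0 ≤ r) (hr1 : r < 1) :
    Summable fun k : ℕ => ((k : ℝ) + 1) ^ p * r ^ k := by
  set n := ⌈p⌉₊
  have hr : ‖r‖ < 1 := by rwa [Real.norm_of_nonneg hr0]
  have hdom : Summable fun k : ℕ => 2 ^ (n - 1) * ((k : ℝ) ^ n * r ^ k + r ^ k) :=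
    ((summable_pow_mul_geometric_of_norm_lt_one n hr).add
      (summable_geometric_of_lt_one hr0 hr1)).mul_left _
  refine hdom.of_nonneg_of_le (fun k => by positivity) fun k => ?_
  calc ((k : ℝ) + 1) ^ p * r ^ k ≤ ((k : ℝ) + 1) ^ n * r ^ k := by
        gcongr
        rw [← Real.rpow_natCast]
        exact Real.rpow_le_rpow_of_exponent_le (by linarith [k.cast_nonneg (α := ℝ)])
          (Nat.le_ceil p)
    _ ≤ 2 ^ (n - 1) * ((k : ℝ) ^ n + 1 ^ n) * r ^ k := by
        gcongr; exact add_pow_le (by positivity) zero_le_one n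
    _ = 2 ^ (n - 1) * ((k : ℝ) ^ n * r ^ k + r ^ k) := by ring

theorem sum_antidiagonal_mul_le_of_rpow_decay {x y : ℕ → ℝ} {e X Y : ℝ}
    (hx0 : ∀ s, 0 ≤ x s) (hy0 : ∀ s, 0 ≤ y s) (hX : 0 ≤ X) (hY : 0 ≤ Y) (he : 0 ≤ e)
    (hxs : Summable x) (hys : Summable y)
    (hx : ∀ s, 1 ≤ s → x s ≤ X * (s : ℝ) ^ (-e)) (hy : ∀ s, 1 ≤ s → y s ≤ Y * (s : ℝ) ^ (-e))
    {t : ℕ} (ht : 1 ≤ t) :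
    ∑ p ∈ antidiagonal t, x p.1 * y p.2
      ≤ 2 ^ e * (X * ∑' s, y s + Y * ∑' s, x s) * (t : ℝ) ^ (-e) := by
  set B := 2 ^ e * (t : ℝ) ^ (-e)
  have hB : 0 ≤ B := by positivity
  have hhalf : ∀ z : ℕ → ℝ, ∀ Z, 0 ≤ Z → (∀ s, 1 ≤ s → z s ≤ Z * (s : ℝ) ^ (-e)) →
      ∀ s, t ≤ 2 * s → z s ≤ Z * B := fun z Z hZ hz s hs =>
    (hz s (by omega)).trans (mul_le_mul_of_nonneg_left
      (by exact_mod_cast rpow_neg_le_rpow_mul_rpow_neg he two_pos ht hs) hZ)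
  have hterm : ∀ p ∈ antidiagonal t, x p.1 * y p.2 ≤ B * (X * y p.2 + Y * x p.1) := by
    intro p hp
    rw [HasAntidiagonal.mem_antidiagonal] at hp
    rcases le_or_gt t (2 * p.1) with h | h
    · nlinarith [hhalf x X hX hx p.1 h, hx0 p.1, hy0 p.2, mul_nonneg hY (hx0 p.1)]
    · nlinarith [hhalf y Y hY hy p.2 (by omega), hx0 p.1, hy0 p.2, mul_nonneg hX (hy0 p.2)]
  have hpartial : ∀ z : ℕ → ℝ, (∀ s, 0 ≤ z s) → Summable z →
      ∑ p ∈ antidiagonal t, z p.1 ≤ ∑' s, z s :=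
    fun z hz0 hz => by
      rw [Nat.sum_antidiagonal_eq_sum_range_succ (fun i _ => z i)]
      exact hz.sum_le_tsum _ fun s _ => hz0 s
  calc ∑ p ∈ antidiagonal t, x p.1 * y p.2
      ≤ ∑ p ∈ antidiagonal t, B * (X * y p.2 + Y * x p.1) := sum_le_sum hterm
    _ = B * (X * ∑ p ∈ antidiagonal t, y p.2 + Y * ∑ p ∈ antidiagonal t, x p.1) := by
        rw [← mul_sum, sum_add_distrib, ← mul_sum, ← mul_sum]
    _ ≤ B * (X * ∑' s, y s + Y * ∑' s, x s) := by
        have hy' : ∑ p ∈ antidiagonal t, y p.2 ≤ ∑' s, y s := by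
          rw [← Nat.sum_antidiagonal_swap]; exact hpartial y hy0 hys
        gcongr
        exact hpartial x hx0 hxs
    _ = 2 ^ e * (X * ∑' s, y s + Y * ∑' s, x s) * (t : ℝ) ^ (-e) := by ring

/-- The `k`-fold convolution power `a^{*k}(u)` of the sequence `(a t)_{t ≥ 1}`. -/
noncomputable def convPow (a : ℕ → ℝ) (k u : ℕ) : ℝ :=
  ∑ f ∈ (Finset.Nat.antidiagonalTuple k u).filter (fun f => ∀ i, 1 ≤ f i), ∏ i, a (f i)

theorem le_of_mem_antidiagonalTuple {k u : ℕ} {f : Fin k → ℕ}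
    (hf : f ∈ Finset.Nat.antidiagonalTuple k u) (i : Fin k) : f i ≤ u := by
  rw [Finset.Nat.mem_antidiagonalTuple] at hf
  exact hf ▸ single_le_sum (fun j _ => Nat.zero_le (f j)) (mem_univ i)

theorem exists_le_mul_of_mem_antidiagonalTuple {k u : ℕ} {f : Fin (k + 1) → ℕ}
    (hf : f ∈ Finset.Nat.antidiagonalTuple (k + 1) u) : ∃ i, u ≤ (k + 1) * f i := by
  rw [Finset.Nat.mem_antidiagonalTuple] at hf
  obtain ⟨i, -, hi⟩ := exists_max_image univ f univ_nonempty
  refine ⟨i, hf ▸ ?_⟩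
  simpa using sum_le_card_nsmul univ f (f i) fun j _ => hi j (mem_univ j)

theorem sum_prod_le_pow_sum_range {a : ℕ → ℝ} (ha : ∀ s, 0 ≤ a s) {ι : Type*} {k T : ℕ}
    {S : Finset ι} {π : ι → Fin k → ℕ} (hπ : Set.InjOn π S) (hT : ∀ x ∈ S, ∀ i, π x i ≤ T) :
    ∑ x ∈ S, ∏ i, a (π x i) ≤ (∑ s ∈ range (T + 1), a s) ^ k := by
  classical
  rw [← sum_image (g := π) (f := fun g => ∏ i, a (g i)) hπ, ← Fin.prod_const, prod_univ_sum]
  refine sum_le_sum_of_subset_of_nonneg (fun g hg => ?_) fun g _ _ => prod_nonneg fun i _ => ha _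
  obtain ⟨x, hx, rfl⟩ := mem_image.1 hg
  exact Fintype.mem_piFinset.2 fun i => mem_range_succ_iff.2 (hT x hx i)

theorem convPow_nonneg {a : ℕ → ℝ} (ha : ∀ s, 0 ≤ a s) (k u : ℕ) : 0 ≤ convPow a k u :=
  sum_nonneg fun _ _ => prod_nonneg fun _ _ => ha _

theorem convPow_le_pow_sum_range {a : ℕ → ℝ} (ha : ∀ s, 0 ≤ a s) (k u : ℕ) :
    convPow a k u ≤ (∑ s ∈ range (u + 1), a s) ^ k :=
  sum_prod_le_pow_sum_range ha (Set.injOn_id _) fun _ hf =>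
    le_of_mem_antidiagonalTuple (mem_filter.1 hf).1

theorem sum_prod_filter_large_coord_le {a : ℕ → ℝ} (ha : ∀ s, 0 ≤ a s) {c e : ℝ} (hc : 0 ≤ c)
    (he : 0 ≤ e) (hdecay : ∀ s, 1 ≤ s → a s ≤ c * (s : ℝ) ^ (-e)) {k t : ℕ} (ht : 0 < t)
    (i : Fin (k + 1)) :
    ∑ f ∈ (Finset.Nat.antidiagonalTuple (k + 1) t).filter (fun f => t ≤ (k + 1) * f i),
        ∏ j, a (f j)
      ≤ c * ((k : ℝ) + 1) ^ e * (t : ℝ) ^ (-e) * (∑ s ∈ range (t + 1), a s) ^ k := by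
  set S := (Finset.Nat.antidiagonalTuple (k + 1) t).filter (fun f => t ≤ (k + 1) * f i)
  have hsplit : ∀ f ∈ S, f i + ∑ j, f (i.succAbove j) = t := fun f hf => by
    rw [← Fin.sum_univ_succAbove f i]
    exact Finset.Nat.mem_antidiagonalTuple.1 (mem_filter.1 hf).1
  have hinj : Set.InjOn (Fin.removeNth i) (S : Set (Fin (k + 1) → ℕ)) := by
    intro f hf g hg hfg
    rw [mem_coe] at hf hg
    have hfi : f i = g i := by
      have := hsplit f hf; have := hsplit g hg
      have : ∑ j, f (i.succAbove j) = ∑ j, g (i.succAbove j) := by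
        simp only [← Fin.removeNth_apply, hfg]
      omega
    rw [← Fin.insertNth_self_removeNth i f, ← Fin.insertNth_self_removeNth i g, hfi, hfg]
  have hlarge : ∀ f ∈ S, a (f i) ≤ c * ((k : ℝ) + 1) ^ e * (t : ℝ) ^ (-e) := fun f hf => by
    have h := (mem_filter.1 hf).2
    calc a (f i) ≤ c * (f i : ℝ) ^ (-e) := hdecay _ (by nlinarith)
      _ ≤ c * (((k + 1 : ℕ) : ℝ) ^ e * (t : ℝ) ^ (-e)) := by
          gcongr; exact rpow_neg_le_rpow_mul_rpow_neg he k.succ_pos ht h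
      _ = c * ((k : ℝ) + 1) ^ e * (t : ℝ) ^ (-e) := by push_cast; ring
  calc ∑ f ∈ S, ∏ j, a (f j)
      = ∑ f ∈ S, a (f i) * ∏ j, a (Fin.removeNth i f j) :=
        sum_congr rfl fun f _ => Fin.prod_univ_succAbove _ i
    _ ≤ ∑ f ∈ S, c * ((k : ℝ) + 1) ^ e * (t : ℝ) ^ (-e) * ∏ j, a (Fin.removeNth i f j) :=
        sum_le_sum fun f hf => by
          gcongr
          · exact prod_nonneg fun j _ => ha _
          · exact hlarge f hf
    _ ≤ c * ((k : ℝ) + 1) ^ e * (t : ℝ) ^ (-e) * (∑ s ∈ range (t + 1), a s) ^ k := by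
        rw [← mul_sum]
        gcongr
        exact sum_prod_le_pow_sum_range ha hinj fun f hf j =>
          le_of_mem_antidiagonalTuple (mem_filter.1 hf).1 _

theorem convPow_succ_le {a : ℕ → ℝ} (ha : ∀ s, 0 ≤ a s) {c e : ℝ} (hc : 0 ≤ c) (he : 0 ≤ e)
    (hdecay : ∀ s, 1 ≤ s → a s ≤ c * (s : ℝ) ^ (-e)) {k t : ℕ} (ht : 0 < t) :
    convPow a (k + 1) t
      ≤ c * ((k : ℝ) + 1) ^ (1 + e) * (∑ s ∈ range (t + 1), a s) ^ k * (t : ℝ) ^ (-e) := by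
  classical
  set T := Finset.Nat.antidiagonalTuple (k + 1) t
  set P : (Fin (k + 1) → ℕ) → ℝ := fun f => ∏ j, a (f j)
  have hP : ∀ f, 0 ≤ P f := fun f => prod_nonneg fun j _ => ha _
  have hcover : ∀ f ∈ T, P f ≤ ∑ i, if t ≤ (k + 1) * f i then P f else 0 := fun f hf => by
    obtain ⟨i, hi⟩ := exists_le_mul_of_mem_antidiagonalTuple hf
    calc P f = if t ≤ (k + 1) * f i then P f else 0 := (if_pos hi).symm
      _ ≤ _ := single_le_sum (f := fun i => if t ≤ (k + 1) * f i then P f else 0)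
          (fun j _ => by split_ifs <;> simp [hP]) (mem_univ i)
  calc convPow a (k + 1) t ≤ ∑ f ∈ T, P f :=
        sum_le_sum_of_subset_of_nonneg (filter_subset _ _) fun f _ _ => hP f
    _ ≤ ∑ i, ∑ f ∈ T.filter (fun f => t ≤ (k + 1) * f i), P f := by
        simp only [sum_filter]
        rw [sum_comm]
        exact sum_le_sum hcover
    _ ≤ ∑ _i : Fin (k + 1),
          c * ((k : ℝ) + 1) ^ e * (t : ℝ) ^ (-e) * (∑ s ∈ range (t + 1), a s) ^ k :=
        sum_le_sum fun i _ => sum_prod_filter_large_coord_le ha hc he hdecay ht i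
    _ = c * ((k : ℝ) + 1) ^ (1 + e) * (∑ s ∈ range (t + 1), a s) ^ k * (t : ℝ) ^ (-e) := by
        rw [sum_const, card_univ, Fintype.card_fin, nsmul_eq_mul,
          Real.rpow_one_add' (by positivity) (by positivity)]
        push_cast; ring

theorem summable_convPow {a : ℕ → ℝ} (ha : ∀ s, 0 ≤ a s) {η : ℝ}
    (hη : ∀ T, ∑ s ∈ range (T + 1), a s ≤ η) (hη1 : η < 1) (u : ℕ) :
    Summable fun k => convPow a k u :=
  (summable_geometric_of_lt_one ((sum_nonneg fun s _ => ha s).trans (hη 0)) hη1).of_nonneg_of_le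
    (fun k => convPow_nonneg ha k u) fun k => (convPow_le_pow_sum_range ha k u).trans
      (pow_le_pow_left₀ (sum_nonneg fun s _ => ha s) (hη u) k)

theorem tsum_convPow_le {a : ℕ → ℝ} (ha : ∀ s, 0 ≤ a s) {c e η : ℝ} (hc : 0 ≤ c) (he : 0 ≤ e)
    (hdecay : ∀ s, 1 ≤ s → a s ≤ c * (s : ℝ) ^ (-e))
    (hη : ∀ T, ∑ s ∈ range (T + 1), a s ≤ η) (hη1 : η < 1) {t : ℕ} (ht : 1 ≤ t) :
    ∑' k, convPow a k t ≤ c * (∑' k : ℕ, ((k : ℝ) + 1) ^ (1 + e) * η ^ k) * (t : ℝ) ^ (-e) := by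
  have hη0 : 0 ≤ η := (sum_nonneg fun s _ => ha s).trans (hη 0)
  obtain ⟨u, rfl⟩ : ∃ u, t = u + 1 := ⟨t - 1, by omega⟩
  have hzero : convPow a 0 (u + 1) = 0 := by
    rw [convPow, Finset.Nat.antidiagonalTuple_zero_succ, filter_empty, sum_empty]
  have hsummable := summable_convPow ha hη hη1 (u + 1)
  rw [hsummable.tsum_eq_zero_add, hzero, zero_add, ← tsum_mul_left, ← tsum_mul_right]
  have hdom : Summable fun k : ℕ =>
      c * (((k : ℝ) + 1) ^ (1 + e) * η ^ k) * ((u + 1 : ℕ) : ℝ) ^ (-e) :=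
    ((summable_add_one_rpow_mul_geometric hη0 hη1).mul_left c).mul_right _
  refine hsummable.comp_injective (add_left_injective 1) |>.tsum_le_tsum (fun k => ?_) hdom
  calc convPow a (k + 1) (u + 1)
      ≤ c * ((k : ℝ) + 1) ^ (1 + e) * (∑ s ∈ range (u + 1 + 1), a s) ^ k
          * ((u + 1 : ℕ) : ℝ) ^ (-e) :=
        convPow_succ_le ha hc he hdecay u.succ_pos
    _ ≤ c * (((k : ℝ) + 1) ^ (1 + e) * η ^ k) * ((u + 1 : ℕ) : ℝ) ^ (-e) := by
        rw [← mul_assoc]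
        gcongr
        · exact sum_nonneg fun s _ => ha s
        · exact hη _

theorem tsum_sum_antidiagonal_mul_convPow {a : ℕ → ℝ} (ha : ∀ s, 0 ≤ a s) {η : ℝ}
    (hη : ∀ T, ∑ s ∈ range (T + 1), a s ≤ η) (hη1 : η < 1) (b : ℕ → ℝ) (t : ℕ) :
    ∑' k, ∑ p ∈ antidiagonal t, b p.1 * convPow a k p.2
      = ∑ p ∈ antidiagonal t, b p.1 * ∑' k, convPow a k p.2 := by
  have h : ∀ p ∈ antidiagonal t, Summable fun k => b p.1 * convPow a k p.2 := fun p _ =>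
    (summable_convPow ha hη hη1 p.2).mul_left (b p.1)
  rw [Summable.tsum_finsetSum h]
  exact sum_congr rfl fun p _ => tsum_mul_left

theorem renewal_convolution_delocalization_bound_general
    (d : ℕ) (hd : 3 ≤ d) (a : ℕ → ℝ) (b : ℕ → ℝ) (c₁ c₂ η : ℝ)
    (hc₁ : 0 < c₁) (hc₂ : 0 < c₂)
    (ha0 : ∀ t, 0 ≤ a t) (hb0 : ∀ t, 0 ≤ b t)
    (hab : ∀ t : ℕ, 1 ≤ t → a t ≤ c₁ * (t : ℝ) ^ (-(d : ℝ)/2))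
    (hsum : Summable a) (hη : ∑' t, a t = η) (hη1 : η < 1)
    (hbb : ∀ t : ℕ, 1 ≤ t → b t ≤ c₂ * (t : ℝ) ^ (-(d : ℝ)/2)) :
    ∃ C > (0:ℝ), ∀ t : ℕ, 1 ≤ t →
      (∑' k : ℕ,
        ∑ p ∈ Finset.HasAntidiagonal.antidiagonal t,
          b p.1 *
            ∑ f ∈ (Finset.Nat.antidiagonalTuple k p.2).filter (fun f => ∀ i, 1 ≤ f i),
              ∏ i, a (f i))
        ≤ C * (t : ℝ) ^ (-(d : ℝ)/2) := by
  have he : 1 < (d : ℝ) / 2 := by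
    have : (3 : ℝ) ≤ d := by exact_mod_cast hd
    linarith
  simp only [neg_div] at hab hbb ⊢
  generalize (d : ℝ) / 2 = e at he hab hbb ⊢
  have hpart : ∀ T, ∑ s ∈ range (T + 1), a s ≤ η := fun T =>
    hη ▸ hsum.sum_le_tsum _ fun s _ => ha0 s
  have hη0 : 0 ≤ η := (sum_nonneg fun s _ => ha0 s).trans (hpart 0)
  set G : ℕ → ℝ := fun u => ∑' k, convPow a k u
  set M := c₁ * ∑' k : ℕ, ((k : ℝ) + 1) ^ (1 + e) * η ^ k
  have hG0 : ∀ u, 0 ≤ G u := fun u => tsum_nonneg fun k => convPow_nonneg ha0 k u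
  have h0e : (0 : ℝ) ≤ e := by linarith
  have hGdecay : ∀ u, 1 ≤ u → G u ≤ M * (u : ℝ) ^ (-e) := fun u hu =>
    tsum_convPow_le ha0 hc₁.le h0e hab hpart hη1 hu
  have hM : 0 ≤ M := by positivity
  set K := 2 ^ e * (c₂ * ∑' u, G u + M * ∑' s, b s)
  have hK : 0 ≤ K := by
    have : 0 ≤ ∑' u, G u := tsum_nonneg hG0
    have : 0 ≤ ∑' s, b s := tsum_nonneg hb0
    positivity
  refine ⟨K + 1, by linarith, fun t ht => ?_⟩
  calc ∑' k, ∑ p ∈ antidiagonal t, b p.1 * convPow a k p.2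
      = ∑ p ∈ antidiagonal t, b p.1 * G p.2 := tsum_sum_antidiagonal_mul_convPow ha0 hpart hη1 b t
    _ ≤ K * (t : ℝ) ^ (-e) :=
        sum_antidiagonal_mul_le_of_rpow_decay hb0 hG0 hc₂.le hM h0e
          (summable_of_le_rpow_neg hb0 hbb he) (summable_of_le_rpow_neg hG0 hGdecay he)
          hbb hGdecay ht
    _ ≤ (K + 1) * (t : ℝ) ^ (-e) := by gcongr; linarith

theorem renewal_convolution_delocalization_bound
    (d : ℕ) (hd : 3 ≤ d) (a : ℕ → ℝ) (b : ℕ → ℝ) (c₁ c₂ η : ℝ)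
    (hc₁ : 0 < c₁) (hc₂ : 0 < c₂)
    (ha0 : ∀ t, 0 ≤ a t) (hb0 : ∀ t, 0 ≤ b t)
    (hab : ∀ t : ℕ, 1 ≤ t → a t ≤ c₁ * (t : ℝ) ^ (-(d : ℝ)/2))
    (hsum : Summable a) (hη : ∑' t, a t = η) (hη1 : η < 1)
    (hbb : ∀ t : ℕ, 1 ≤ t → b t ≤ c₂ * (t : ℝ) ^ (-(d : ℝ)/2))
    (hb0' : b 0 ≤ c₂) :
    ∃ C > (0:ℝ), ∀ t : ℕ, 1 ≤ t →
      (∑' k : ℕ,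
        ∑ p ∈ Finset.HasAntidiagonal.antidiagonal t,
          b p.1 *
            ∑ f ∈ (Finset.Nat.antidiagonalTuple k p.2).filter (fun f => ∀ i, 1 ≤ f i),
              ∏ i, a (f i))
        ≤ C * (t : ℝ) ^ (-(d : ℝ)/2) :=
  renewal_convolution_delocalization_bound_general d hd a b c₁ c₂ η hc₁ hc₂ ha0 hb0 hab hsum hη hη1
    hbb
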